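/- Let A ⊆ H be an affine commutative-by-finite Hopf algebra with A semiprime or central in H, or H pointed, so that H = A ⊕ X as right A-modules, with projection Π : H → A along X. Then: (i) the map Π° : A° → H°, α ↦ α∘Π, is a well-defined injective morphism of right A°-comodules; (ii) the restriction map ι° : H° → A°, f ↦ f∘ι, is a surjective Hopf algebra homomorphism with ι° ∘ Π° = id on A°; (iii) via ι°, H° is a right and a left A°-comodule algebra, and its subalgebra of right coinvariants and its subalgebra of left coinvariants both equal H̄*. -/

import Mathlib

open TensorProduct LinearMap Coalgebra

namespace Paper

noncomputable section

variable (k : Type) [Field k]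

section Coalg

variable {C : Type} [AddCommMonoid C] [Module k C] [Coalgebra k C]

/-- Convolution product on the linear dual of a coalgebra. -/
noncomputable def conv (f g : Module.Dual k C) : Module.Dual k C :=
  (TensorProduct.lid k k).toLinearMap ∘ₗ TensorProduct.map f g ∘ₗ Coalgebra.comul

/-- The unit of the convolution algebra on the dual: the counit. -/
noncomputable def convOne : Module.Dual k C := Coalgebra.counit

/-- Iterated convolution power. -/
noncomputable def convPow (f : Module.Dual k C) : ℕ → Module.Dual k C
  | 0 => convOne k
  | n + 1 => conv k f (convPow f n)

end Coalg

/-- The finite dual of an algebra: functionals vanishing on a two-sided ideal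
of finite codimension. -/
def finDual (H : Type) [Ring H] [Algebra k H] : Set (Module.Dual k H) :=
  {f | ∃ I : Submodule k H, (∀ (h : H), ∀ x ∈ I, h * x ∈ I ∧ x * h ∈ I) ∧
    I ≤ LinearMap.ker f ∧ FiniteDimensional k (H ⧸ I)}

section Hopf

variable (H : Type) [Ring H] [HopfAlgebra k H]

/-- Left adjoint action `(ad_ℓ h)(a) = Σ h₁ a S(h₂)`. -/
noncomputable def adl (h a : H) : H :=
  TensorProduct.lift (((LinearMap.mul k H).comp (LinearMap.mulRight k a)).compl₂
    (HopfAlgebra.antipode (R := k))) (Coalgebra.comul h)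

/-- Right adjoint action `(ad_r h)(a) = Σ S(h₁) a h₂`. -/
noncomputable def adr (h a : H) : H :=
  TensorProduct.lift ((LinearMap.mul k H).comp ((LinearMap.mulRight k a) ∘ₗ
    (HopfAlgebra.antipode (R := k)))) (Coalgebra.comul h)

/-- Left adjoint action on the dual: `(ad_ℓ φ)(f) = Σ φ₁ f S°(φ₂)`, i.e.
`h ↦ Σ φ(h₁ S(h₃)) f(h₂)`. -/
noncomputable def adld (φ f : Module.Dual k H) : Module.Dual k H :=
  (TensorProduct.lid k k).toLinearMap ∘ₗ
    TensorProduct.map (φ ∘ₗ LinearMap.mul' k H ∘ₗ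
      (HopfAlgebra.antipode (R := k)).lTensor H) f ∘ₗ
    (TensorProduct.assoc k H H H).symm.toLinearMap ∘ₗ
    ((TensorProduct.comm k H H).toLinearMap.lTensor H) ∘ₗ
    ((Coalgebra.comul (R := k) (A := H)).lTensor H) ∘ₗ
    Coalgebra.comul

/-- Right adjoint action on the dual: `(ad_r φ)(f) = Σ S°(φ₁) f φ₂`, i.e.
`h ↦ Σ φ(S(h₁) h₃) f(h₂)`. -/
noncomputable def adrd (φ f : Module.Dual k H) : Module.Dual k H :=
  (TensorProduct.lid k k).toLinearMap ∘ₗ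
    TensorProduct.map (φ ∘ₗ LinearMap.mul' k H ∘ₗ
      (HopfAlgebra.antipode (R := k)).rTensor H) f ∘ₗ
    (TensorProduct.assoc k H H H).symm.toLinearMap ∘ₗ
    ((TensorProduct.comm k H H).toLinearMap.lTensor H) ∘ₗ
    ((Coalgebra.comul (R := k) (A := H)).lTensor H) ∘ₗ
    Coalgebra.comul

/-- A submodule is a subcoalgebra if its image under `comul` lies in `V ⊗ V`. -/
def IsSubcoalgebra (V : Submodule k H) : Prop :=
  ∀ x ∈ V, Coalgebra.comul (R := k) x ∈
    LinearMap.range (TensorProduct.map V.subtype V.subtype)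

/-- A Hopf algebra is pointed if every simple subcoalgebra is one-dimensional. -/
def IsPointedHopf : Prop :=
  ∀ V : Submodule k H, IsSubcoalgebra k H V → V ≠ ⊥ →
    (∀ W : Submodule k H, W ≤ V → IsSubcoalgebra k H W → W = ⊥ ∨ W = V) →
    Module.finrank k ↥V = 1

/-- A coideal: `ε(X) = 0` and `Δ(X) ⊆ X ⊗ H + H ⊗ X`. -/
def IsCoideal (X : Submodule k H) : Prop :=
  (∀ x ∈ X, Coalgebra.counit (R := k) x = 0) ∧
  (∀ x ∈ X, Coalgebra.comul (R := k) x ∈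
    LinearMap.range (TensorProduct.map X.subtype (LinearMap.id (M := H))) ⊔
    LinearMap.range (TensorProduct.map (LinearMap.id (M := H)) X.subtype))

/-- `S` is a Hopf subalgebra of the finite dual `H°` (with its convolution
product; closure under the coproduct is expressed in pairing form). -/
def IsHopfSubalgSet (S : Set (Module.Dual k H)) : Prop :=
  S ⊆ finDual k H ∧ convOne k ∈ S ∧
  (∀ f g, f ∈ S → g ∈ S → f + g ∈ S ∧ conv k f g ∈ S) ∧
  (∀ (c : k), ∀ f ∈ S, c • f ∈ S) ∧
  (∀ f ∈ S, f ∘ₗ HopfAlgebra.antipode (R := k) ∈ S) ∧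
  (∀ f ∈ S, ∃ (n : ℕ) (s t : Fin n → Module.Dual k H),
    (∀ i, s i ∈ S ∧ t i ∈ S) ∧ ∀ x y : H, f (x * y) = ∑ i, s i x * t i y)

end Hopf

section Ext

variable (A : Type) [CommRing A] [HopfAlgebra k A]
variable (H : Type) [Ring H] [HopfAlgebra k H]

/-- The submodule `A⁺H` of `H` (image of the augmentation ideal times `H`). -/
def augHIdeal (ι : A →ₗ[k] H) : Submodule k H :=
  Submodule.span k
    {x : H | ∃ (a : A) (h : H), Coalgebra.counit (R := k) a = 0 ∧ x = ι a * h}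

/-- The subset of the dual of `H` corresponding to `H̄* = (H/A⁺H)*`:
functionals vanishing on `A⁺H`. -/
def hbarStar (ι : A →ₗ[k] H) : Set (Module.Dual k H) :=
  {f | ∀ x ∈ augHIdeal k A H ι, f x = 0}

/-- The tangential component `W(H°)`. -/
def tangential (ι : A →ₗ[k] H) : Set (Module.Dual k H) :=
  {f | f ∈ finDual k H ∧ ∃ n : ℕ, 0 < n ∧ ∀ x ∈ (augHIdeal k A H ι) ^ n, f x = 0}

/-- The augmentation ideal of the commutative Hopf algebra `A`. -/
def augIdeal : Ideal A := RingHom.ker (Bialgebra.counitAlgHom k A)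

/-- The irreducible component `A'` of `A°` containing the counit:
functionals vanishing on a power of the augmentation ideal. -/
def Aprime : Set (Module.Dual k A) :=
  {f | ∃ n : ℕ, 0 < n ∧ ∀ x ∈ (augIdeal k A) ^ n, f x = 0}

/-- The Lie algebra `𝔤` of `G_H`: primitive functionals on `A`. -/
def gLie : Set (Module.Dual k A) :=
  {f | f 1 = 0 ∧ ∀ x y : A, f (x * y) =
    f x * Coalgebra.counit (R := k) y + Coalgebra.counit (R := k) x * f y}

/-- An ideal of `A` is `H̄`-stable if it is stable under the (left) adjoint
action of `H` on `A` (which factors through `H̄`). -/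
def IsHStable (ι : A →ₗ[k] H) (I : Ideal A) : Prop :=
  ∀ (h : H), ∀ a ∈ I, ∃ b ∈ I, ι b = adl k H h (ι a)

/-- `mc` is the `H̄`-core of `m`: the largest `H̄`-stable ideal of `A`
contained in `m`. -/
def IsCore (ι : A →ₗ[k] H) (m mc : Ideal A) : Prop :=
  IsHStable k A H ι mc ∧ mc ≤ m ∧
    ∀ I : Ideal A, IsHStable k A H ι I → I ≤ m → I ≤ mc

/-- The submodule `H·J` of `H`, for an ideal `J` of `A`. -/
def leftMul (ι : A →ₗ[k] H) (J : Ideal A) : Submodule k H :=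
  Submodule.span k {x : H | ∃ (h : H), ∃ a ∈ J, x = h * ι a}

/-- The submodule `J·H` of `H`, for an ideal `J` of `A`. -/
def rightMul (ι : A →ₗ[k] H) (J : Ideal A) : Submodule k H :=
  Submodule.span k {x : H | ∃ (h : H), ∃ a ∈ J, x = ι a * h}

/-- The subcoalgebra `ĝ := (H/H m_g^{(H̄)})*` of `H°`, as a submodule of the dual. -/
def ghat (ι : A →ₗ[k] H) (core : Ideal A → Ideal A) (g : A →ₐ[k] k) :
    Submodule k (Module.Dual k H) :=
  (leftMul k A H ι (core (RingHom.ker g))).dualAnnihilator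

/-- The character component `k̂G_H` of `H°`. -/
def charComp (ι : A →ₗ[k] H) (core : Ideal A → Ideal A) :
    Set (Module.Dual k H) :=
  {f | ∃ s : Finset (A →ₐ[k] k), s.Nonempty ∧
    ∀ x ∈ ⨅ g ∈ s, leftMul k A H ι (core (RingHom.ker g)), f x = 0}

/-- Hypothesis (OrbSemi): all orbit algebras `A/m^{(H̄)}` are semisimple. -/
def OrbSemi (core : Ideal A → Ideal A) : Prop :=
  ∀ m : Ideal A, m.IsMaximal → IsSemisimpleRing (A ⧸ core m)

/-- Restriction of functionals along `ι` : the map `ι° : H° → A°`. -/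
def iotaDual (ι : A →ₗ[k] H) (f : Module.Dual k H) : Module.Dual k A := f ∘ₗ ι

/-- Coextension of functionals along the projection `Π : H → A`:
the map `Π° : A° → H°`. -/
def PiDual (p : H →ₗ[k] A) (α : Module.Dual k A) : Module.Dual k H := α ∘ₗ p

/-- `A ⊆ H` is an affine commutative-by-finite Hopf algebra, where the
inclusion of the commutative normal Hopf subalgebra `A` is recorded by the
injective Hopf algebra map `ι`. -/
structure CommByFinite (ι : A →ₗ[k] H) : Prop where
  ι_inj : Function.Injective ι
  ι_one : ι 1 = 1
  ι_mul : ∀ a b : A, ι (a * b) = ι a * ι b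
  ι_comul : ∀ a : A,
    Coalgebra.comul (R := k) (ι a) = TensorProduct.map ι ι (Coalgebra.comul a)
  ι_counit : ∀ a : A,
    Coalgebra.counit (R := k) (ι a) = Coalgebra.counit (R := k) a
  ι_antipode : ∀ a : A,
    ι (HopfAlgebra.antipode (R := k) a) = HopfAlgebra.antipode (R := k) (ι a)
  affine : ∃ s : Finset A, Algebra.adjoin k (s : Set A) = ⊤
  normal_left : ∀ (h : H) (a : A), adl k H h (ι a) ∈ Set.range ι
  normal_right : ∀ (h : H) (a : A), adr k H h (ι a) ∈ Set.range ι
  finiteOver : ∃ s : Finset H,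
    Submodule.span k {x : H | ∃ (a : A), ∃ y ∈ s, x = ι a * y} = ⊤

/-- The standing hypothesis: `A` is semiprime (reduced) or central in `H`,
or `H` is pointed. -/
def StandingHyp (ι : A →ₗ[k] H) : Prop :=
  IsReduced A ∨ (∀ (a : A) (h : H), ι a * h = h * ι a) ∨ IsPointedHopf k H

/-- `Π : H → A` is the projection of a direct sum decomposition
`H = A ⊕ X` of right `A`-modules. -/
structure IsSplitting (ι : A →ₗ[k] H) (p : H →ₗ[k] A) : Prop where
  left_inv : ∀ a : A, p (ι a) = a
  right_linear : ∀ (h : H) (a : A), p (h * ι a) = p h * a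

/-- Hypothesis (CoSplit) for a given splitting `Π`: the complement
`X = ker Π` is a coideal of `H`. -/
def CoSplit (p : H →ₗ[k] A) : Prop := IsCoideal k H (LinearMap.ker p)

end Ext

section Quot

variable (A : Type) [CommRing A] [HopfAlgebra k A]
variable (H : Type) [Ring H] [HopfAlgebra k H]
variable (Hb : Type) [Ring Hb] [HopfAlgebra k Hb]

/-- `π : H → H̄` realises `H̄` as the quotient Hopf algebra `H/A⁺H`. -/
structure IsHbarQuotient (ι : A →ₗ[k] H) (π : H →ₗ[k] Hb) : Prop where
  π_surj : Function.Surjective π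
  π_one : π 1 = 1
  π_mul : ∀ x y : H, π (x * y) = π x * π y
  π_comul : ∀ x : H,
    Coalgebra.comul (R := k) (π x) = TensorProduct.map π π (Coalgebra.comul x)
  π_counit : ∀ x : H,
    Coalgebra.counit (R := k) (π x) = Coalgebra.counit (R := k) x
  π_antipode : ∀ x : H,
    π (HopfAlgebra.antipode (R := k) x) = HopfAlgebra.antipode (R := k) (π x)
  π_ker : LinearMap.ker π = augHIdeal k A H ι
  findim : FiniteDimensional k Hb

/-- Composition with `π` : the map `π° : H̄* → H°`. -/
def piDual (π : H →ₗ[k] Hb) (β : Module.Dual k Hb) : Module.Dual k H := β ∘ₗ π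

end Quot

end

end Paper

/-!
Apart from the first claim of (i), everything is formal: `ι° ∘ Π° = id` because `Π ∘ ι = id`,
`ι°` respects the structure maps because `ι` does, and both coinvariance conditions say that `f`
kills `A⁺H = HA⁺`; the two descriptions of this subspace agree by normality, through
`h a = Σ (ad_ℓ h₁)(a) h₂` and `a h = Σ h₁ (ad_r h₂)(a)`.

For `α ∈ A°` vanishing on a cofinite ideal `I`, let `J ⊆ I` be the largest `ad_r`-stable subspace.
Since `ad_r` kills `A⁺H`, it factors through the finite-dimensional `H̄`, so `J` is still cofinite;
`H·J` is then a two-sided ideal of `H`, cofinite because `H` is finite over `A`, and `α ∘ Π` kills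
it because `Π` is right `A`-linear.
-/

section QuotientFiniteness

variable {k M M' : Type*} [Field k] [AddCommGroup M] [Module k M] [AddCommGroup M'] [Module k M']

lemma finiteDimensional_quotient_comap (f : M →ₗ[k] M') (P : Submodule k M')
    [FiniteDimensional k (M' ⧸ P)] : FiniteDimensional k (M ⧸ P.comap f) :=
  Module.Finite.of_injective (Submodule.mapQ _ P f le_rfl) <| by
    rw [← LinearMap.ker_eq_bot, Submodule.ker_mapQ, Submodule.mkQ_map_self]

lemma finiteDimensional_quotient_of_surjective {f : M →ₗ[k] M'} (hf : Function.Surjective f)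
    {P : Submodule k M} {Q : Submodule k M'} (hPQ : P ≤ Q.comap f)
    [FiniteDimensional k (M ⧸ P)] : FiniteDimensional k (M' ⧸ Q) :=
  Module.Finite.of_surjective (Submodule.mapQ P Q f hPQ) <| by
    rw [← LinearMap.range_eq_top, Submodule.range_mapQ, LinearMap.range_eq_top.mpr hf,
      Submodule.map_top, Submodule.range_mkQ]

lemma finiteDimensional_quotient_pi {ι : Type*} [Fintype ι] (P : Submodule k M)
    [FiniteDimensional k (M ⧸ P)] :
    FiniteDimensional k ((ι → M) ⧸ Submodule.pi Set.univ fun _ : ι => P) := by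
  classical
  exact Module.Finite.equiv (Submodule.quotientPi fun _ : ι => P).symm

end QuotientFiniteness

lemma span_absorbs_mul_of_generators {k H : Type*} [CommSemiring k] [Semiring H] [Algebra k H]
    {S : Set H} (hS : ∀ g : H, ∀ s ∈ S, g * s ∈ Submodule.span k S ∧ s * g ∈ Submodule.span k S)
    (g : H) {x : H} (hx : x ∈ Submodule.span k S) :
    g * x ∈ Submodule.span k S ∧ x * g ∈ Submodule.span k S := by
  induction hx using Submodule.span_induction with
  | mem s hs => exact hS g s hs
  | zero => simp
  | add x y _ _ hx hy => simpa [mul_add, add_mul] using ⟨add_mem hx.1 hy.1, add_mem hx.2 hy.2⟩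
  | smul c x _ hx =>
    simpa [mul_smul_comm, smul_mul_assoc] using
      ⟨Submodule.smul_mem _ c hx.1, Submodule.smul_mem _ c hx.2⟩

open HopfAlgebra

lemma Coalgebra.sum_counit_mul_counit {R C ι : Type*} [CommSemiring R] [AddCommMonoid C]
    [Module R C] [Coalgebra R C] {c : C} (r : Coalgebra.Repr R c ι) :
    ∑ i ∈ r.index, counit (R := R) (r.left i) * counit (r.right i) = counit c := by
  simpa [map_sum] using congr(counit (R := R) $(Coalgebra.sum_counit_smul r))

lemma Coalgebra.sum_counit_right_smul {R C ι : Type*} [CommSemiring R] [AddCommMonoid C]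
    [Module R C] [Coalgebra R C] {c : C} (r : Coalgebra.Repr R c ι) :
    ∑ i ∈ r.index, counit (R := R) (r.right i) • r.left i = c := by
  simpa only [map_sum, _root_.TensorProduct.rid_tmul, one_smul] using
    congr((_root_.TensorProduct.rid R C) $(Coalgebra.sum_tmul_counit_eq r))

lemma Bialgebra.forall_eq_counit_mul_iff {k A : Type*} [CommRing k] [Ring A] [Bialgebra k A]
    (φ : A →ₗ[k] k) :
    (∀ a, φ a = counit a * φ 1) ↔ ∀ a, counit (R := k) a = 0 → φ a = 0 := by
  refine ⟨fun h a ha => by rw [h, ha, zero_mul], fun h a => ?_⟩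
  have hsplit : a = (a - counit (R := k) a • 1) + counit (R := k) a • 1 := by abel
  rw [hsplit, map_add, h _ (by simp), map_smul, smul_eq_mul, map_add, map_smul,
    Bialgebra.counit_one, map_sub, map_smul, Bialgebra.counit_one]
  simp

namespace Paper

section AdjointAction

variable {k : Type} [Field k] {H : Type} [Ring H] [HopfAlgebra k H]

lemma adr_eq_sum {h : H} {τ : Type*} (r : Coalgebra.Repr k h τ) (x : H) :
    adr k H h x = ∑ i ∈ r.index, antipode k (r.left i) * x * r.right i := by
  simp [adr, ← r.eq, map_sum, mul_assoc]

lemma adl_eq_sum {h : H} {τ : Type*} (r : Coalgebra.Repr k h τ) (x : H) :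
    adl k H h x = ∑ i ∈ r.index, r.left i * x * antipode k (r.right i) := by
  simp [adl, ← r.eq, map_sum, mul_assoc]

variable (k H) in
noncomputable def adrₗ : H →ₗ[k] H →ₗ[k] H :=
  LinearMap.mk₂ k (adr k H)
    (fun h h' x => by simp [adr, map_add])
    (fun c h x => by simp [adr, map_smul])
    (fun h x x' => by simp [adr_eq_sum (ℛ k h), mul_add, add_mul, Finset.sum_add_distrib])
    (fun c h x => by simp [adr_eq_sum (ℛ k h), Finset.smul_sum])

@[simp] lemma adrₗ_apply (h x : H) : adrₗ k H h x = adr k H h x := rfl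

@[simp] lemma adr_one_left (x : H) : adr k H 1 x = x := by
  simp [adr, Algebra.TensorProduct.one_def]

lemma adr_mul_left (h h' x : H) : adr k H (h * h') x = adr k H h' (adr k H h x) := by
  simp only [adr_eq_sum ((ℛ k h).mul (ℛ k h')), adr_eq_sum (ℛ k h), adr_eq_sum (ℛ k h'),
    Coalgebra.Repr.mul_index, Coalgebra.Repr.mul_left, Coalgebra.Repr.mul_right,
    Finset.sum_product, Finset.mul_sum, Finset.sum_mul, antipode_mul_antidistrib, mul_assoc]
  exact Finset.sum_comm

lemma counit_adr (h x : H) : counit (R := k) (adr k H h x) = counit h * counit (R := k) x := by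
  simp only [adr_eq_sum (ℛ k h), map_sum, Bialgebra.counit_mul, counit_antipode,
    mul_right_comm _ (counit x), ← Finset.sum_mul, sum_counit_mul_counit]

lemma counit_adl (h x : H) : counit (R := k) (adl k H h x) = counit h * counit (R := k) x := by
  simp only [adl_eq_sum (ℛ k h), map_sum, Bialgebra.counit_mul, counit_antipode,
    mul_right_comm _ (counit x), ← Finset.sum_mul, sum_counit_mul_counit]

lemma mul_eq_sum_mul_adr (x h : H) :
    x * h = ∑ i ∈ (ℛ k h).index, (ℛ k h).left i * adr k H ((ℛ k h).right i) x := by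
  set r := ℛ k h
  have coassoc := congr((LinearMap.mul' k H ∘ₗ LinearMap.lTensor H (LinearMap.mul' k H ∘ₗ
      TensorProduct.map (LinearMap.mulRight k x ∘ₗ antipode k) LinearMap.id))
    $(Coalgebra.sum_tmul_tmul_eq r (fun i => ℛ k (r.left i)) (fun i => ℛ k (r.right i))))
  simp only [map_sum, LinearMap.comp_apply, LinearMap.lTensor_tmul, TensorProduct.map_tmul,
    LinearMap.mul'_apply, LinearMap.mulRight_apply, LinearMap.id_apply] at coassoc
  calc x * h = ∑ i ∈ r.index, counit (R := k) (r.left i) • (x * r.right i) := by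
        simp only [← mul_smul_comm, ← Finset.mul_sum, Coalgebra.sum_counit_smul]
    _ = ∑ i ∈ r.index, ∑ j ∈ (ℛ k (r.left i)).index, (ℛ k (r.left i)).left j *
          (antipode k ((ℛ k (r.left i)).right j) * x * r.right i) := by
        simp only [← mul_assoc, ← Finset.sum_mul, sum_mul_antipode_eq_smul, smul_mul_assoc,
          one_mul]
    _ = _ := by
        rw [coassoc]
        simp only [adr_eq_sum (ℛ k _), Finset.mul_sum, mul_assoc]

lemma mul_eq_sum_adl_mul (x h : H) :
    h * x = ∑ i ∈ (ℛ k h).index, adl k H ((ℛ k h).left i) x * (ℛ k h).right i := by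
  set r := ℛ k h
  have coassoc := congr((LinearMap.mul' k H ∘ₗ LinearMap.lTensor H (LinearMap.mul' k H) ∘ₗ
      TensorProduct.map (LinearMap.mulRight k x) (TensorProduct.map (antipode k) LinearMap.id))
    $(Coalgebra.sum_tmul_tmul_eq r (fun i => ℛ k (r.left i)) (fun i => ℛ k (r.right i))))
  simp only [map_sum, LinearMap.comp_apply, LinearMap.lTensor_tmul, TensorProduct.map_tmul,
    LinearMap.mul'_apply, LinearMap.mulRight_apply, LinearMap.id_apply] at coassoc
  calc h * x = ∑ i ∈ r.index, counit (R := k) (r.right i) • (r.left i * x) := by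
        simp only [← smul_mul_assoc, ← Finset.sum_mul, Coalgebra.sum_counit_right_smul]
    _ = ∑ i ∈ r.index, ∑ j ∈ (ℛ k (r.right i)).index, r.left i * x *
          (antipode k ((ℛ k (r.right i)).left j) * (ℛ k (r.right i)).right j) := by
        simp only [← Finset.mul_sum, sum_antipode_mul_eq_smul, mul_smul_comm, mul_one]
    _ = _ := by
        rw [← coassoc]
        simp only [adl_eq_sum (ℛ k _), Finset.sum_mul, mul_assoc]

end AdjointAction

variable {k : Type} [Field k] {A : Type} [CommRing A] [HopfAlgebra k A]
  {H : Type} [Ring H] [HopfAlgebra k H] {ι : A →ₗ[k] H}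

def spanMulIota (ι : A →ₗ[k] H) (J : Submodule k A) : Submodule k H :=
  Submodule.span k {x | ∃ (h : H), ∃ a ∈ J, x = h * ι a}

namespace CommByFinite

lemma adr_iota_iota (hC : CommByFinite k A H ι) (c a : A) :
    adr k H (ι c) (ι a) = counit (R := k) c • ι a := by
  have : adr k H (ι c) (ι a) =
      ι (∑ i ∈ (ℛ k c).index, antipode k ((ℛ k c).left i) * (ℛ k c).right i * a) := by
    simp [adr, hC.ι_comul, ← (ℛ k c).eq, map_sum, ← hC.ι_antipode, ← hC.ι_mul, mul_right_comm]
  rw [this, ← Finset.sum_mul, sum_antipode_mul_eq_smul, smul_one_mul, map_smul]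

lemma adr_eq_zero_of_mem_augHIdeal (hC : CommByFinite k A H ι) {u : H}
    (hu : u ∈ augHIdeal k A H ι) (a : A) : adr k H u (ι a) = 0 := by
  suffices augHIdeal k A H ι ≤ LinearMap.ker ((adrₗ k H).flip (ι a)) from this hu
  refine Submodule.span_le.mpr ?_
  rintro _ ⟨c, h, hc, rfl⟩
  rw [SetLike.mem_coe, LinearMap.mem_ker, LinearMap.flip_apply, adrₗ_apply, adr_mul_left,
    hC.adr_iota_iota, hc, zero_smul, ← adrₗ_apply, map_zero]

lemma augHIdeal_eq_span_mul_iota (hC : CommByFinite k A H ι) :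
    augHIdeal k A H ι =
      Submodule.span k {x | ∃ (a : A) (h : H), counit (R := k) a = 0 ∧ x = h * ι a} := by
  apply le_antisymm <;> refine Submodule.span_le.mpr ?_
  · rintro _ ⟨c, h, hc, rfl⟩
    rw [SetLike.mem_coe, mul_eq_sum_mul_adr (k := k)]
    refine Submodule.sum_mem _ fun i _ => ?_
    obtain ⟨b, hb⟩ := hC.normal_right ((ℛ k h).right i) c
    refine Submodule.subset_span ⟨b, _, ?_, by rw [hb]⟩
    rw [← hC.ι_counit, hb, counit_adr, hC.ι_counit, hc, mul_zero]
  · rintro _ ⟨a, h, ha, rfl⟩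
    rw [SetLike.mem_coe, mul_eq_sum_adl_mul (k := k)]
    refine Submodule.sum_mem _ fun i _ => ?_
    obtain ⟨d, hd⟩ := hC.normal_left ((ℛ k h).left i) a
    refine Submodule.subset_span ⟨d, _, ?_, by rw [hd]⟩
    rw [← hC.ι_counit, hd, counit_adl, hC.ι_counit, ha, mul_zero]

lemma span_sup_augHIdeal_eq_top (hC : CommByFinite k A H ι) {s : Finset H}
    (hs : Submodule.span k {x | ∃ (a : A), ∃ y ∈ s, x = ι a * y} = ⊤) :
    Submodule.span k s ⊔ augHIdeal k A H ι = ⊤ := by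
  refine eq_top_iff.mpr (hs ▸ Submodule.span_le.mpr ?_)
  rintro _ ⟨a, y, hy, rfl⟩
  have hdecomp : ι a * y = ι (a - counit (R := k) a • 1) * y + counit (R := k) a • y := by
    simp [hC.ι_one, sub_mul]
  rw [SetLike.mem_coe, hdecomp]
  refine add_mem (Submodule.mem_sup_right (Submodule.subset_span ⟨_, y, by simp, rfl⟩))
    (Submodule.mem_sup_left (Submodule.smul_mem _ _ (Submodule.subset_span hy)))

noncomputable def adrA (hC : CommByFinite k A H ι) : H →ₗ[k] A →ₗ[k] A :=
  ((adrₗ k H).compl₂ ι).codRestrict₂ ι hC.ι_inj hC.normal_right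

@[simp] lemma iota_adrA (hC : CommByFinite k A H ι) (h : H) (a : A) :
    ι (hC.adrA h a) = adr k H h (ι a) :=
  LinearMap.codRestrict₂_apply _ _ _ _ h a

lemma adrA_one (hC : CommByFinite k A H ι) (a : A) : hC.adrA 1 a = a :=
  hC.ι_inj (by simp)

lemma adrA_mul (hC : CommByFinite k A H ι) (h h' : H) (a : A) :
    hC.adrA (h * h') a = hC.adrA h' (hC.adrA h a) :=
  hC.ι_inj (by simp [adr_mul_left])

lemma adrA_eq_zero_of_mem_augHIdeal (hC : CommByFinite k A H ι) {u : H}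
    (hu : u ∈ augHIdeal k A H ι) (a : A) : hC.adrA u a = 0 :=
  hC.ι_inj (by simp [hC.adr_eq_zero_of_mem_augHIdeal hu])

/-- The largest subspace of `I` stable under the right adjoint action of `H`. -/
noncomputable def adrCore (hC : CommByFinite k A H ι) (I : Submodule k A) : Submodule k A :=
  ⨅ h, I.comap (hC.adrA h)

lemma adrCore_le (hC : CommByFinite k A H ι) (I : Submodule k A) : hC.adrCore I ≤ I :=
  fun a ha => by simpa [adrA_one] using Submodule.mem_iInf _ |>.mp ha 1

lemma adrA_mem_adrCore (hC : CommByFinite k A H ι) {I : Submodule k A} (h : H) {a : A}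
    (ha : a ∈ hC.adrCore I) : hC.adrA h a ∈ hC.adrCore I := by
  simp only [adrCore, Submodule.mem_iInf, Submodule.mem_comap] at ha ⊢
  exact fun h' => hC.adrA_mul h h' a ▸ ha (h * h')

lemma finiteDimensional_quotient_adrCore (hC : CommByFinite k A H ι) (I : Submodule k A)
    [FiniteDimensional k (A ⧸ I)] : FiniteDimensional k (A ⧸ hC.adrCore I) := by
  obtain ⟨s, hs⟩ := hC.finiteOver
  have hcore : hC.adrCore I =
      (Submodule.pi Set.univ fun _ : s => I).comap (LinearMap.pi fun y : s => hC.adrA y) := by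
    ext a
    simp only [adrCore, Submodule.mem_iInf, Submodule.mem_comap, Submodule.mem_pi,
      Set.mem_univ, LinearMap.pi_apply, true_implies]
    refine ⟨fun ha y => ha y, fun ha h => ?_⟩
    suffices ⊤ ≤ I.comap (hC.adrA.flip a) from this Submodule.mem_top
    rw [← hC.span_sup_augHIdeal_eq_top hs, sup_le_iff, Submodule.span_le]
    refine ⟨fun y hy => ha ⟨y, hy⟩, fun u hu => ?_⟩
    simp [hC.adrA_eq_zero_of_mem_augHIdeal hu]
  have := finiteDimensional_quotient_pi (ι := s) I
  rw [hcore]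
  exact finiteDimensional_quotient_comap _ _

lemma spanMulIota_absorbs_mul (hC : CommByFinite k A H ι) {J : Submodule k A}
    (hJ : ∀ (h : H), ∀ a ∈ J, hC.adrA h a ∈ J) (g : H) {x : H} (hx : x ∈ spanMulIota ι J) :
    g * x ∈ spanMulIota ι J ∧ x * g ∈ spanMulIota ι J := by
  refine span_absorbs_mul_of_generators ?_ g hx
  rintro g _ ⟨h, a, ha, rfl⟩
  refine ⟨Submodule.subset_span ⟨g * h, a, ha, (mul_assoc _ _ _).symm⟩, ?_⟩
  rw [mul_assoc, mul_eq_sum_mul_adr (k := k) (ι a) g, Finset.mul_sum]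
  refine Submodule.sum_mem _ fun i _ => Submodule.subset_span
    ⟨h * (ℛ k g).left i, _, hJ ((ℛ k g).right i) a ha, by rw [iota_adrA, mul_assoc]⟩

/-- `H` is spanned by `ι(A)·s` for a finite `s`, so `H/H·ι(J)` is a quotient of `(A/J)^s`. -/
lemma finiteDimensional_quotient_spanMulIota (hC : CommByFinite k A H ι) {J : Submodule k A}
    (hJ : ∀ (h : H), ∀ a ∈ J, hC.adrA h a ∈ J) [FiniteDimensional k (A ⧸ J)] :
    FiniteDimensional k (H ⧸ spanMulIota ι J) := by
  classical
  obtain ⟨s, hs⟩ := hC.finiteOver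
  let Ψ : (s → A) →ₗ[k] H := ∑ y : s, LinearMap.mulRight k (y : H) ∘ₗ ι ∘ₗ LinearMap.proj y
  have hΨ : Function.Surjective Ψ := by
    rw [← LinearMap.range_eq_top, eq_top_iff, ← hs, Submodule.span_le]
    rintro _ ⟨a, y, hy, rfl⟩
    refine ⟨Pi.single ⟨y, hy⟩ a, ?_⟩
    simp [Ψ, Pi.single_apply, apply_ite ι, ite_mul, Finset.sum_ite_eq']
  have hle : (Submodule.pi Set.univ fun _ : s => J) ≤ (spanMulIota ι J).comap Ψ := by
    intro a ha
    simp only [Submodule.mem_comap, Ψ, LinearMap.sum_apply, LinearMap.comp_apply,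
      LinearMap.proj_apply, LinearMap.mulRight_apply]
    refine Submodule.sum_mem _ fun y _ => ?_
    exact (hC.spanMulIota_absorbs_mul hJ y
      (Submodule.subset_span ⟨1, a y, ha y trivial, (one_mul _).symm⟩)).2
  have := finiteDimensional_quotient_pi (ι := s) J
  exact finiteDimensional_quotient_of_surjective hΨ hle

lemma forall_map_iota_mul_iff_mem_hbarStar (hC : CommByFinite k A H ι) (f : Module.Dual k H) :
    (∀ (h : H) (a : A), f (ι a * h) = counit a * f h) ↔ f ∈ hbarStar k A H ι := by
  have hcounit (h : H) := Bialgebra.forall_eq_counit_mul_iff (f ∘ₗ LinearMap.mulRight k h ∘ₗ ι)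
  simp only [LinearMap.comp_apply, LinearMap.mulRight_apply, hC.ι_one, one_mul] at hcounit
  rw [forall_congr' hcounit]
  change _ ↔ augHIdeal k A H ι ≤ LinearMap.ker f
  rw [augHIdeal, Submodule.span_le]
  exact ⟨fun hf _ ⟨a, h, ha, hx⟩ => hx ▸ hf h a ha, fun hf h a ha => hf ⟨a, h, ha, rfl⟩⟩

lemma forall_map_mul_iota_iff_mem_hbarStar (hC : CommByFinite k A H ι) (f : Module.Dual k H) :
    (∀ (h : H) (a : A), f (h * ι a) = counit a * f h) ↔ f ∈ hbarStar k A H ι := by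
  have hcounit (h : H) := Bialgebra.forall_eq_counit_mul_iff (f ∘ₗ LinearMap.mulLeft k h ∘ₗ ι)
  simp only [LinearMap.comp_apply, LinearMap.mulLeft_apply, hC.ι_one, mul_one] at hcounit
  rw [forall_congr' hcounit]
  change _ ↔ augHIdeal k A H ι ≤ LinearMap.ker f
  rw [hC.augHIdeal_eq_span_mul_iota, Submodule.span_le]
  exact ⟨fun hf _ ⟨a, h, ha, hx⟩ => hx ▸ hf h a ha, fun hf h a ha => hf ⟨a, h, ha, rfl⟩⟩

end CommByFinite

lemma piDual_mem_finDual (hC : CommByFinite k A H ι) {p : H →ₗ[k] A}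
    (hsplit : IsSplitting k A H ι p) {α : Module.Dual k A} (hα : α ∈ finDual k A) :
    PiDual k A H p α ∈ finDual k H := by
  obtain ⟨I, hI, hIα, hIfin⟩ := hα
  have hJ : ∀ (h : H), ∀ a ∈ hC.adrCore I, hC.adrA h a ∈ hC.adrCore I :=
    fun h _ ha => hC.adrA_mem_adrCore h ha
  have := hC.finiteDimensional_quotient_adrCore I
  refine ⟨spanMulIota ι (hC.adrCore I), fun g _ hx => hC.spanMulIota_absorbs_mul hJ g hx,
    Submodule.span_le.mpr ?_, hC.finiteDimensional_quotient_spanMulIota hJ⟩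
  rintro _ ⟨h, a, ha, rfl⟩
  simpa [PiDual, hsplit.right_linear] using hIα (hI (p h) a (hC.adrCore_le I ha)).1

lemma iotaDual_mem_finDual (hC : CommByFinite k A H ι) {f : Module.Dual k H}
    (hf : f ∈ finDual k H) : iotaDual k A H ι f ∈ finDual k A := by
  obtain ⟨I, hI, hIf, hIfin⟩ := hf
  refine ⟨I.comap ι, fun c a ha => ?_, fun a ha => hIf ha, finiteDimensional_quotient_comap ι I⟩
  simpa only [Submodule.mem_comap, hC.ι_mul] using hI (ι c) (ι a) ha

lemma iotaDual_conv (hC : CommByFinite k A H ι) (f g : Module.Dual k H) :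
    iotaDual k A H ι (conv k f g) = conv k (iotaDual k A H ι f) (iotaDual k A H ι g) := by
  ext a
  simp only [iotaDual, conv, LinearMap.comp_apply, hC.ι_comul]
  rw [← LinearMap.comp_apply (TensorProduct.map f g), ← TensorProduct.map_comp]

lemma iotaDual_piDual {p : H →ₗ[k] A} (hsplit : IsSplitting k A H ι p) (α : Module.Dual k A) :
    iotaDual k A H ι (PiDual k A H p α) = α := by
  ext a
  simp [iotaDual, PiDual, hsplit.left_inv]

end Paper

open Paper in
theorem statement_2_general
    (k : Type) [Field k]
    (A : Type) [CommRing A] [HopfAlgebra k A]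
    (H : Type) [Ring H] [HopfAlgebra k H]
    (ι : A →ₗ[k] H) (p : H →ₗ[k] A)
    (hCbF : CommByFinite k A H ι)
    (hsplit : IsSplitting k A H ι p) :
    -- (i) `Π°` maps `A°` into `H°`, injectively
    (∀ α ∈ finDual k A, PiDual k A H p α ∈ finDual k H) ∧
    Set.InjOn (PiDual k A H p) (finDual k A) ∧
    -- and is a morphism of right `A°`-comodules (pairing form)
    (∀ α ∈ finDual k A, ∀ (h : H) (a : A),
      PiDual k A H p α (h * ι a) = PiDual k A H p (α ∘ₗ LinearMap.mulRight k a) h) ∧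
    -- (ii) `ι°` maps `H°` into `A°` and is a Hopf algebra homomorphism:
    (∀ f ∈ finDual k H, iotaDual k A H ι f ∈ finDual k A) ∧
    (∀ f g : Module.Dual k H,
      iotaDual k A H ι (conv k f g) = conv k (iotaDual k A H ι f) (iotaDual k A H ι g)) ∧
    iotaDual k A H ι (convOne k) = convOne k ∧
    (∀ (f : Module.Dual k H) (a b : A), iotaDual k A H ι f (a * b) = f (ι a * ι b)) ∧
    (∀ f : Module.Dual k H, iotaDual k A H ι f 1 = f 1) ∧
    (∀ (f : Module.Dual k H) (a : A),
      iotaDual k A H ι f (HopfAlgebra.antipode (R := k) a)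
        = f (HopfAlgebra.antipode (R := k) (ι a))) ∧
    -- `ι° ∘ Π° = id`, so `Π°` is injective and `ι°` is surjective onto `A°`
    (∀ α : Module.Dual k A, iotaDual k A H ι (PiDual k A H p α) = α) ∧
    (∀ α ∈ finDual k A, ∃ f ∈ finDual k H, iotaDual k A H ι f = α) ∧
    -- (iii) right and left `A°`-coinvariants of `H°` both equal `H̄*`
    {f ∈ finDual k H | ∀ (h : H) (a : A),
        f (h * ι a) = Coalgebra.counit (R := k) a * f h}
      = finDual k H ∩ hbarStar k A H ι ∧
    {f ∈ finDual k H | ∀ (h : H) (a : A),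
        f (ι a * h) = Coalgebra.counit (R := k) a * f h}
      = finDual k H ∩ hbarStar k A H ι :=
  ⟨fun _ hα => piDual_mem_finDual hCbF hsplit hα,
    fun α _ β _ hαβ => by rw [← iotaDual_piDual hsplit α, hαβ, iotaDual_piDual hsplit β],
    fun α _ h a => by simp [PiDual, hsplit.right_linear],
    fun _ hf => iotaDual_mem_finDual hCbF hf,
    iotaDual_conv hCbF,
    LinearMap.ext hCbF.ι_counit,
    fun f a b => by simp [iotaDual, hCbF.ι_mul],
    fun f => by simp [iotaDual, hCbF.ι_one],
    fun f a => by simp [iotaDual, hCbF.ι_antipode],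
    iotaDual_piDual hsplit,
    fun α hα => ⟨PiDual k A H p α, piDual_mem_finDual hCbF hsplit hα, iotaDual_piDual hsplit α⟩,
    Set.ext fun f => and_congr_right fun _ => hCbF.forall_map_mul_iota_iff_mem_hbarStar f,
    Set.ext fun f => and_congr_right fun _ => hCbF.forall_map_iota_mul_iff_mem_hbarStar f⟩

open Paper in
/-- With `H = A ⊕ X` as right `A`-modules and `Π : H → A` the
projection along `X`: (i) `Π° : A° → H°, α ↦ α∘Π` is a well-defined injective
morphism of right `A°`-comodules; (ii) `ι° : H° → A°, f ↦ f∘ι` is a surjective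
Hopf algebra homomorphism with `ι° ∘ Π° = id`; (iii) via `ι°`, `H°` is a right
and left `A°`-comodule algebra whose right and left coinvariants equal `H̄*`. -/
theorem statement_2
    (k : Type) [Field k] [IsAlgClosed k]
    (A : Type) [CommRing A] [HopfAlgebra k A]
    (H : Type) [Ring H] [HopfAlgebra k H]
    (ι : A →ₗ[k] H) (p : H →ₗ[k] A)
    (hCbF : CommByFinite k A H ι)
    (hyp : StandingHyp k A H ι)
    (hsplit : IsSplitting k A H ι p) :
    -- (i) `Π°` maps `A°` into `H°`, injectively
    (∀ α ∈ finDual k A, PiDual k A H p α ∈ finDual k H) ∧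
    Set.InjOn (PiDual k A H p) (finDual k A) ∧
    -- and is a morphism of right `A°`-comodules (pairing form)
    (∀ α ∈ finDual k A, ∀ (h : H) (a : A),
      PiDual k A H p α (h * ι a) = PiDual k A H p (α ∘ₗ LinearMap.mulRight k a) h) ∧
    -- (ii) `ι°` maps `H°` into `A°` and is a Hopf algebra homomorphism:
    (∀ f ∈ finDual k H, iotaDual k A H ι f ∈ finDual k A) ∧
    (∀ f g : Module.Dual k H,
      iotaDual k A H ι (conv k f g) = conv k (iotaDual k A H ι f) (iotaDual k A H ι g)) ∧
    iotaDual k A H ι (convOne k) = convOne k ∧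
    (∀ (f : Module.Dual k H) (a b : A), iotaDual k A H ι f (a * b) = f (ι a * ι b)) ∧
    (∀ f : Module.Dual k H, iotaDual k A H ι f 1 = f 1) ∧
    (∀ (f : Module.Dual k H) (a : A),
      iotaDual k A H ι f (HopfAlgebra.antipode (R := k) a)
        = f (HopfAlgebra.antipode (R := k) (ι a))) ∧
    -- `ι° ∘ Π° = id`, so `Π°` is injective and `ι°` is surjective onto `A°`
    (∀ α : Module.Dual k A, iotaDual k A H ι (PiDual k A H p α) = α) ∧
    (∀ α ∈ finDual k A, ∃ f ∈ finDual k H, iotaDual k A H ι f = α) ∧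
    -- (iii) right and left `A°`-coinvariants of `H°` both equal `H̄*`
    {f ∈ finDual k H | ∀ (h : H) (a : A),
        f (h * ι a) = Coalgebra.counit (R := k) a * f h}
      = finDual k H ∩ hbarStar k A H ι ∧
    {f ∈ finDual k H | ∀ (h : H) (a : A),
        f (ι a * h) = Coalgebra.counit (R := k) a * f h}
      = finDual k H ∩ hbarStar k A H ι :=
  statement_2_general k A H ι p hCbF hsplit
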